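/- arXiv:1411.5437 — 3 statements merged into one kernel-verified Lean document; each statement's English description precedes it below -/
import Mathlib

section
/- Let Σ be an alphabet and let R and C be positive regular expressions over Σ such that (R,C) is plural. Then the regular expression E over Σ' is positive, and an (E,E)-crossword exists if and only if an (R,C)-crossword exists. -/
/-!
Every word of `E` has one of the four shapes `♥w` (`w ∈ R`), `♦♠♠♠*`, `w♠` (`w ∈ C`) and `♥♥♥*♦`,
and since `R` and `C` are positive its first and last letters tell which. If `X` is an
`(R,C)`-crossword, it is at least `2 × 2` by plurality, and `rho X` is an `(E,E)`-crossword.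

Conversely, in an `(E,E)`-crossword the top-left letter is `♥`: otherwise the first row would end
in `♠`, and no word of `E` starts with `♠`. So the first row and the first column each have shape
`♥R` or `♥♥♥*♦`. If the first row is `♥R`, every other column starts with a letter of `Σ`, hence
is `C♠`; every row but the last then ends with a letter of `Σ`, hence is `♥R`; removing the first
column and the last row leaves an `(R,C)`-crossword. If the first column is `♥R`, the same
applies to the transpose. Both cannot be `♥♥♥*♦`: the last row would start with `♦`, hence be
`♦♠…♠`, and the second column would start with `♥` and end with `♠`.
-/

namespace RegexCrossword

/-- `X` is an `(R,C)`-crossword: every row of `X` (read left to right) matches `R`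
and every column (read top to bottom) matches `C`. -/
def IsCrossword {σ : Type} {m n : ℕ} (R C : RegularExpression σ)
    (X : Matrix (Fin m) (Fin n) σ) : Prop :=
  (∀ i : Fin m, (List.ofFn fun j => X i j) ∈ R.matches') ∧
  (∀ j : Fin n, (List.ofFn fun i => X i j) ∈ C.matches')

/-- An `(R,C)`-crossword (a nonempty matrix) exists. -/
def CrosswordExists {σ : Type} (R C : RegularExpression σ) : Prop :=
  ∃ (m n : ℕ), 0 < m ∧ 0 < n ∧ ∃ X : Matrix (Fin m) (Fin n) σ, IsCrossword R C X

/-- A regular expression is positive iff the empty word does not match it. -/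
def PositiveRE {σ : Type} (R : RegularExpression σ) : Prop :=
  [] ∉ R.matches'

/-- `(R,C)` is plural: both are positive and every `(R,C)`-crossword has at
least two rows and at least two columns. -/
def Plural {σ : Type} (R C : RegularExpression σ) : Prop :=
  PositiveRE R ∧ PositiveRE C ∧
    ∀ (m n : ℕ) (X : Matrix (Fin m) (Fin n) σ),
      0 < m → 0 < n → IsCrossword R C X → 2 ≤ m ∧ 2 ≤ n

/-- The spade symbol `♠` (bottom edge marker) in the extended alphabet `σ ⊕ Fin 3`. -/
def spade {σ : Type} : σ ⊕ Fin 3 := Sum.inr 0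

/-- The heart symbol `♥` (left edge marker) in the extended alphabet `σ ⊕ Fin 3`. -/
def heart {σ : Type} : σ ⊕ Fin 3 := Sum.inr 1

/-- The diamond symbol `♦` (corner marker) in the extended alphabet `σ ⊕ Fin 3`. -/
def diamond {σ : Type} : σ ⊕ Fin 3 := Sum.inr 2

open RegularExpression in
/-- `R' := ♥R ∪ ♦♠♠♠*`. -/
def Rext {σ : Type} (R : RegularExpression σ) : RegularExpression (σ ⊕ Fin 3) :=
  char heart * R.map Sum.inl +
    char diamond * char spade * char spade * (char spade).star

open RegularExpression in
/-- `C' := C♠ ∪ ♥♥♥*♦`. -/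
def Cext {σ : Type} (C : RegularExpression σ) : RegularExpression (σ ⊕ Fin 3) :=
  C.map Sum.inl * char spade +
    char heart * char heart * (char heart).star * char diamond

/-- `E := R' ∪ C'`. -/
def Eexp {σ : Type} (R C : RegularExpression σ) : RegularExpression (σ ⊕ Fin 3) :=
  Rext R + Cext C

/-- `ρ` prepends a new leftmost column of `♥`'s to `X` and then appends a new
bottom row consisting of `♦` followed by `♠`'s. -/
def rho {σ : Type} {m n : ℕ} (X : Matrix (Fin m) (Fin n) σ) :
    Matrix (Fin (m + 1)) (Fin (n + 1)) (σ ⊕ Fin 3) := fun i j =>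
  if hi : (i : ℕ) < m then
    if hj : (j : ℕ) = 0 then heart
    else Sum.inl (X ⟨i, hi⟩ ⟨(j : ℕ) - 1, by have := j.isLt; omega⟩)
  else if (j : ℕ) = 0 then diamond else spade

end RegexCrossword

namespace Language

open scoped Computability

variable {α β : Type*} {L : Language α} {a : α} {w : List α}

theorem mem_singleton_mul : w ∈ {[a]} * L ↔ ∃ u ∈ L, w = a :: u := by
  simp only [mem_mul]
  constructor
  · rintro ⟨_, rfl, u, hu, rfl⟩
    exact ⟨u, hu, rfl⟩
  · rintro ⟨u, hu, rfl⟩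
    exact ⟨_, rfl, u, hu, rfl⟩

theorem mem_mul_singleton : w ∈ L * {[a]} ↔ ∃ u ∈ L, w = u ++ [a] := by
  simp only [mem_mul]
  constructor
  · rintro ⟨u, hu, _, rfl, rfl⟩
    exact ⟨u, hu, rfl⟩
  · rintro ⟨u, hu, rfl⟩
    exact ⟨u, hu, _, rfl, rfl⟩

theorem mem_kstar_singleton : w ∈ ({[a]} : Language α)∗ ↔ ∀ x ∈ w, x = a := by
  rw [mem_kstar]
  constructor
  · rintro ⟨L, rfl, hL⟩ x hx
    obtain ⟨y, hy, hxy⟩ := List.mem_flatten.1 hx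
    rwa [show y = [a] from hL y hy, List.mem_singleton] at hxy
  · intro h
    refine ⟨w.map ([·]), (List.flatMap_singleton' w).symm, fun y hy => ?_⟩
    obtain ⟨x, hx, rfl⟩ := List.mem_map.1 hy
    rw [h x hx]
    rfl

theorem mem_singleton_mul_singleton_mul_kstar :
    w ∈ {[a]} * {[a]} * ({[a]} : Language α)∗ ↔ 2 ≤ w.length ∧ ∀ x ∈ w, x = a := by
  rw [mul_assoc]
  simp only [mem_singleton_mul, mem_kstar_singleton]
  constructor
  · rintro ⟨_, ⟨u, hu, rfl⟩, rfl⟩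
    simpa using hu
  · rintro ⟨hw, hwa⟩
    match w, hw with
    | x :: y :: u, _ =>
      simp only [List.mem_cons, forall_eq_or_imp] at hwa
      exact ⟨y :: u, ⟨u, hwa.2.2, by rw [hwa.2.1]⟩, by rw [hwa.1]⟩

theorem mem_map_iff {f : α → β} {w : List β} : w ∈ map f L ↔ ∃ u ∈ L, w = u.map f :=
  ⟨fun ⟨u, hu, h⟩ => ⟨u, hu, h.symm⟩, fun ⟨u, hu, h⟩ => ⟨u, hu, h.symm⟩⟩

variable {k : ℕ}

theorem ofFn_mem_singleton_mul {f : Fin (k + 1) → α} :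
    List.ofFn f ∈ {[a]} * L ↔ f 0 = a ∧ List.ofFn (fun i => f i.succ) ∈ L := by
  rw [List.ofFn_succ, mem_singleton_mul]
  simp only [List.cons.injEq]
  constructor
  · rintro ⟨u, hu, h0, rfl⟩
    exact ⟨h0, hu⟩
  · rintro ⟨h0, hu⟩
    exact ⟨_, hu, h0, rfl⟩

theorem ofFn_mem_mul_singleton {f : Fin (k + 1) → α} :
    List.ofFn f ∈ L * {[a]} ↔ List.ofFn (fun i => f i.castSucc) ∈ L ∧ f (Fin.last k) = a := by
  rw [List.ofFn_succ_last, mem_mul_singleton]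
  simp only [List.append_singleton_inj]
  constructor
  · rintro ⟨u, hu, rfl, hl⟩
    exact ⟨hu, hl⟩
  · rintro ⟨hu, hl⟩
    exact ⟨_, hu, rfl, hl⟩

theorem ofFn_mem_singleton_mul_singleton_mul_kstar {f : Fin k → α} :
    List.ofFn f ∈ {[a]} * {[a]} * ({[a]} : Language α)∗ ↔ 2 ≤ k ∧ ∀ i, f i = a := by
  rw [mem_singleton_mul_singleton_mul_kstar, List.length_ofFn, List.forall_mem_ofFn_iff]

theorem ofFn_mem_map {f : α → β} {g : Fin k → β} :
    List.ofFn g ∈ map f L ↔ ∃ h : Fin k → α, List.ofFn h ∈ L ∧ ∀ i, g i = f (h i) := by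
  rw [mem_map_iff]
  constructor
  · rintro ⟨u, hu, hg⟩
    obtain rfl : u.length = k := by simpa using congrArg List.length hg.symm
    refine ⟨fun i => u[(i : ℕ)], by rwa [List.ofFn_getElem], fun i => ?_⟩
    simpa using congrArg (·[i]?) hg
  · rintro ⟨h, hh, hg⟩
    exact ⟨_, hh, by rw [List.map_ofFn]; exact congrArg List.ofFn (funext hg)⟩

end Language

namespace RegexCrossword

open RegularExpression List Fin
open scoped Computability Matrix

attribute [local simp] spade heart diamond

variable {σ : Type} {R C : RegularExpression σ}

theorem PositiveRE.ne_zero_of_ofFn_mem {k : ℕ} {P : RegularExpression σ} (hP : PositiveRE P)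
    {g : Fin k → σ} (hg : ofFn g ∈ P.matches') : k ≠ 0 := by
  rintro rfl
  exact hP (by simpa using hg)

theorem Eexp_positive (R C : RegularExpression σ) : PositiveRE (Eexp R C) := by
  simp only [PositiveRE, Eexp, Rext, Cext, matches'_add, matches'_mul, matches'_char, mul_assoc,
    Language.mem_add, Language.mem_singleton_mul, Language.mem_mul_singleton]
  simp

section Words

variable {k : ℕ} {f : Fin (k + 1) → σ ⊕ Fin 3}

theorem ofFn_mem_Eexp_iff :
    ofFn f ∈ (Eexp R C).matches' ↔
      (f 0 = heart ∧ ∃ g : Fin k → σ, ofFn g ∈ R.matches' ∧ ∀ i, f i.succ = .inl (g i)) ∨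
      (f 0 = diamond ∧ 2 ≤ k ∧ ∀ i : Fin k, f i.succ = spade) ∨
      ((∃ g : Fin k → σ, ofFn g ∈ C.matches' ∧ ∀ i, f i.castSucc = .inl (g i)) ∧
        f (last k) = spade) ∨
      ((2 ≤ k ∧ ∀ i : Fin k, f i.castSucc = heart) ∧ f (last k) = diamond) := by
  -- `♦♠♠♠*` parses as `((♦♠)♠)♠*`; regroup it as `♦(♠♠♠*)`.
  have hB : (char diamond * char spade * char spade * (char spade).star).matches' =
      {[diamond]} * ({[spade]} * {[spade]} * ({[spade]} : Language (σ ⊕ Fin 3))∗) := by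
    simp only [matches'_mul, matches'_char, matches'_star, mul_assoc]
  simp only [Eexp, Rext, Cext, matches'_add, Language.mem_add, hB]
  simp only [matches'_mul, matches'_char, matches'_star, matches'_map, or_assoc,
    Language.ofFn_mem_singleton_mul, Language.ofFn_mem_mul_singleton, Language.ofFn_mem_map,
    Language.ofFn_mem_singleton_mul_singleton_mul_kstar]

theorem ofFn_mem_Eexp_cases (hR : PositiveRE R) (hC : PositiveRE C)
    (h : ofFn f ∈ (Eexp R C).matches') :
    (f 0 = heart ∧ (∃ a, f (last k) = .inl a) ∧
      ∃ g : Fin k → σ, ofFn g ∈ R.matches' ∧ ∀ i, f i.succ = .inl (g i)) ∨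
    (f 0 = diamond ∧ f (last k) = spade ∧ ∀ i : Fin k, f i.succ = spade) ∨
    ((∃ a, f 0 = .inl a) ∧ f (last k) = spade ∧
      ∃ g : Fin k → σ, ofFn g ∈ C.matches' ∧ ∀ i, f i.castSucc = .inl (g i)) ∨
    (f 0 = heart ∧ f (last k) = diamond ∧ 2 ≤ k ∧ ∀ i : Fin k, f i.castSucc = heart) := by
  rcases ofFn_mem_Eexp_iff.1 h with
    ⟨h0, g, hg, hf⟩ | ⟨h0, hk, hf⟩ | ⟨⟨g, hg, hf⟩, hl⟩ | ⟨⟨hk, hf⟩, hl⟩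
  · obtain ⟨k, rfl⟩ := Nat.exists_eq_succ_of_ne_zero (hR.ne_zero_of_ofFn_mem hg)
    exact Or.inl ⟨h0, ⟨_, by simpa using hf (last k)⟩, g, hg, hf⟩
  · obtain ⟨k, rfl⟩ := Nat.exists_eq_succ_of_ne_zero (by omega : k ≠ 0)
    exact Or.inr (Or.inl ⟨h0, by simpa using hf (last k), hf⟩)
  · obtain ⟨k, rfl⟩ := Nat.exists_eq_succ_of_ne_zero (hC.ne_zero_of_ofFn_mem hg)
    exact Or.inr (Or.inr (Or.inl ⟨⟨_, by simpa using hf 0⟩, hl, g, hg, hf⟩))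
  · obtain ⟨k, rfl⟩ := Nat.exists_eq_succ_of_ne_zero (by omega : k ≠ 0)
    exact Or.inr (Or.inr (Or.inr ⟨by simpa using hf 0, hl, hk, hf⟩))

theorem head_ne_spade_of_ofFn_mem_Eexp (hR : PositiveRE R) (hC : PositiveRE C)
    (h : ofFn f ∈ (Eexp R C).matches') : f 0 ≠ spade := by
  rcases ofFn_mem_Eexp_cases hR hC h with ⟨h0, -⟩ | ⟨h0, -⟩ | ⟨⟨a, h0⟩, -⟩ | ⟨h0, -⟩ <;> simp [h0]

theorem last_eq_spade_iff_of_ofFn_mem_Eexp (hR : PositiveRE R) (hC : PositiveRE C)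
    (h : ofFn f ∈ (Eexp R C).matches') : f (last k) = spade ↔ f 0 ≠ heart := by
  rcases ofFn_mem_Eexp_cases hR hC h with
    ⟨h0, ⟨a, hl⟩, -⟩ | ⟨h0, hl, -⟩ | ⟨⟨a, h0⟩, hl, -⟩ | ⟨h0, hl, -⟩ <;> simp [h0, hl]

theorem heartR_or_heartsDiamond_of_ofFn_mem_Eexp (hR : PositiveRE R) (hC : PositiveRE C)
    (h : ofFn f ∈ (Eexp R C).matches') (h0 : f 0 = heart) :
    (∃ g : Fin k → σ, ofFn g ∈ R.matches' ∧ ∀ i, f i.succ = .inl (g i)) ∨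
      (f (last k) = diamond ∧ 2 ≤ k ∧ ∀ i : Fin k, f i.castSucc = heart) := by
  rcases ofFn_mem_Eexp_cases hR hC h with ⟨-, -, hA⟩ | ⟨h0', -⟩ | ⟨⟨a, h0'⟩, -⟩ | ⟨-, hD⟩
  · exact Or.inl hA
  · simp [h0] at h0'
  · simp [h0] at h0'
  · exact Or.inr hD

theorem cSpade_of_ofFn_mem_Eexp (hR : PositiveRE R) (hC : PositiveRE C)
    (h : ofFn f ∈ (Eexp R C).matches') {a : σ} (h0 : f 0 = .inl a) :
    ∃ g : Fin k → σ, ofFn g ∈ C.matches' ∧ ∀ i, f i.castSucc = .inl (g i) := by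
  rcases ofFn_mem_Eexp_cases hR hC h with ⟨h0', -⟩ | ⟨h0', -⟩ | ⟨-, -, hC'⟩ | ⟨h0', -⟩
  · simp [h0] at h0'
  · simp [h0] at h0'
  · exact hC'
  · simp [h0] at h0'

theorem heartR_of_ofFn_mem_Eexp (hR : PositiveRE R) (hC : PositiveRE C)
    (h : ofFn f ∈ (Eexp R C).matches') {a : σ} (hl : f (last k) = .inl a) :
    ∃ g : Fin k → σ, ofFn g ∈ R.matches' ∧ ∀ i, f i.succ = .inl (g i) := by
  rcases ofFn_mem_Eexp_cases hR hC h with ⟨-, -, hA⟩ | ⟨-, hl', -⟩ | ⟨-, hl', -⟩ | ⟨-, hl', -⟩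
  · exact hA
  all_goals simp [hl] at hl'

theorem spades_of_ofFn_mem_Eexp (hR : PositiveRE R) (hC : PositiveRE C)
    (h : ofFn f ∈ (Eexp R C).matches') (h0 : f 0 = diamond) :
    ∀ i : Fin k, f i.succ = spade := by
  rcases ofFn_mem_Eexp_cases hR hC h with ⟨h0', -⟩ | ⟨-, -, hB⟩ | ⟨⟨a, h0'⟩, -⟩ | ⟨h0', -⟩
  · simp [h0] at h0'
  · exact hB
  all_goals simp [h0] at h0'

end Words

theorem IsCrossword.transpose {m n : ℕ} {X : Matrix (Fin m) (Fin n) σ} (hX : IsCrossword R C X) :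
    IsCrossword C R Xᵀ :=
  ⟨hX.2, hX.1⟩

section Rho

variable {m n : ℕ} (X : Matrix (Fin m) (Fin n) σ)

theorem rho_castSucc_zero (i : Fin m) : rho X i.castSucc 0 = heart := by
  simp [rho]

theorem rho_castSucc_succ (i : Fin m) (j : Fin n) :
    rho X i.castSucc j.succ = .inl (X i j) := by
  simp [rho]

theorem rho_last_zero : rho X (last m) 0 = diamond := by
  simp [rho]

theorem rho_last_succ (j : Fin n) : rho X (last m) j.succ = spade := by
  simp [rho]

end Rho

theorem IsCrossword.rho {m n : ℕ} {X : Matrix (Fin m) (Fin n) σ} (hX : IsCrossword R C X)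
    (hm : 2 ≤ m) (hn : 2 ≤ n) :
    IsCrossword (Eexp R C) (Eexp R C) (rho X) := by
  constructor
  · refine lastCases ?_ (fun i => ?_)
    · exact ofFn_mem_Eexp_iff.2 (Or.inr (Or.inl ⟨rho_last_zero X, hn, rho_last_succ X⟩))
    · exact ofFn_mem_Eexp_iff.2
        (Or.inl ⟨rho_castSucc_zero X i, X i, hX.1 i, rho_castSucc_succ X i⟩)
  · refine cases ?_ (fun j => ?_)
    · exact ofFn_mem_Eexp_iff.2
        (Or.inr (Or.inr (Or.inr ⟨⟨hm, fun i => rho_castSucc_zero X i⟩, rho_last_zero X⟩)))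
    · exact ofFn_mem_Eexp_iff.2 (Or.inr (Or.inr (Or.inl
        ⟨⟨fun i => X i j, hX.2 j, fun i => rho_castSucc_succ X i j⟩, rho_last_succ X j⟩)))

section Forward

variable {m n : ℕ} {Y : Matrix (Fin (m + 1)) (Fin (n + 1)) (σ ⊕ Fin 3)}

theorem crosswordExists_of_heartR_top_row (hR : PositiveRE R) (hC : PositiveRE C)
    (hY : IsCrossword (Eexp R C) (Eexp R C) Y)
    (htop : ∃ g : Fin n → σ, ofFn g ∈ R.matches' ∧ ∀ j, Y 0 j.succ = .inl (g j)) :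
    CrosswordExists R C := by
  obtain ⟨g, hg, htop⟩ := htop
  obtain ⟨n, rfl⟩ := Nat.exists_eq_succ_of_ne_zero (hR.ne_zero_of_ofFn_mem hg)
  have hcols (j : Fin (n + 1)) :
      ∃ c : Fin m → σ, ofFn c ∈ C.matches' ∧ ∀ i, Y i.castSucc j.succ = .inl (c i) :=
    cSpade_of_ofFn_mem_Eexp hR hC (hY.2 j.succ) (htop j)
  choose c hcC hc using hcols
  have hrows (i : Fin m) :
      ∃ r : Fin (n + 1) → σ, ofFn r ∈ R.matches' ∧ ∀ j, Y i.castSucc j.succ = .inl (r j) :=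
    heartR_of_ofFn_mem_Eexp hR hC (hY.1 i.castSucc) (a := c (last n) i)
      (by simpa using hc (last n) i)
  choose r hrR hr using hrows
  have hrc (i : Fin m) : r i = fun j => c j i :=
    funext fun j => Sum.inl_injective ((hr i j).symm.trans (hc j i))
  exact ⟨m, n + 1, Nat.pos_of_ne_zero (hC.ne_zero_of_ofFn_mem (hcC 0)), n.succ_pos,
    fun i j => c j i, fun i => hrc i ▸ hrR i, hcC⟩

theorem not_heartsDiamond_top_row_and_left_column (hR : PositiveRE R) (hC : PositiveRE C)
    (hY : IsCrossword (Eexp R C) (Eexp R C) Y)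
    (hn : 2 ≤ n) (hrow : ∀ j : Fin n, Y 0 j.castSucc = heart) (hcol : Y (last m) 0 = diamond) :
    False :=
  have hbottom := spades_of_ofFn_mem_Eexp hR hC (hY.1 (last m)) hcol
  (last_eq_spade_iff_of_ofFn_mem_Eexp hR hC (hY.2 (succ ⟨0, by omega⟩))).1
    (hbottom ⟨0, by omega⟩) (hrow ⟨1, hn⟩)

end Forward

theorem crosswordExists_of_crosswordExists_Eexp (hR : PositiveRE R) (hC : PositiveRE C)
    (h : CrosswordExists (Eexp R C) (Eexp R C)) : CrosswordExists R C := by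
  obtain ⟨m, n, hm, hn, Y, hY⟩ := h
  obtain ⟨m, rfl⟩ := Nat.exists_eq_succ_of_ne_zero hm.ne'
  obtain ⟨n, rfl⟩ := Nat.exists_eq_succ_of_ne_zero hn.ne'
  have hcorner : Y 0 0 = heart := by
    by_contra hne
    exact head_ne_spade_of_ofFn_mem_Eexp hR hC (hY.2 (last n))
      ((last_eq_spade_iff_of_ofFn_mem_Eexp hR hC (hY.1 0)).2 hne)
  rcases heartR_or_heartsDiamond_of_ofFn_mem_Eexp hR hC (hY.1 0) hcorner with hrow | hrow
  · exact crosswordExists_of_heartR_top_row hR hC hY hrow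
  rcases heartR_or_heartsDiamond_of_ofFn_mem_Eexp hR hC (hY.2 0) hcorner with hcol | hcol
  · exact crosswordExists_of_heartR_top_row hR hC hY.transpose hcol
  exact (not_heartsDiamond_top_row_and_left_column hR hC hY hrow.2.1 hrow.2.2 hcol.1).elim

/-- **Statement 3.** If `R` and `C` are positive regular expressions over `σ`
with `(R, C)` plural, then `E := R' ∪ C'` over `σ ⊕ Fin 3` is positive, and an
`(E,E)`-crossword exists iff an `(R,C)`-crossword exists. -/
theorem Eexp_positive_and_crosswordExists_iff {σ : Type}
    (R C : RegularExpression σ) (hplural : Plural R C) :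
    PositiveRE (Eexp R C) ∧ (CrosswordExists (Eexp R C) (Eexp R C) ↔ CrosswordExists R C) := by
  obtain ⟨hR, hC, hplural⟩ := hplural
  refine ⟨Eexp_positive R C, crosswordExists_of_crosswordExists_Eexp hR hC, ?_⟩
  rintro ⟨m, n, hm, hn, X, hX⟩
  obtain ⟨hm2, hn2⟩ := hplural m n X hm hn hX
  exact ⟨m + 1, n + 1, m.succ_pos, n.succ_pos, rho X, hX.rho hm2 hn2⟩

end RegexCrossword
end

section
/- Let m, n, k ≥ 1 and let inc : Fin m → Fin n → Bool be arbitrary (e.g., the vertex–edge incidence matrix of a graph with m vertices and n edges). For each i let r_i denote the length-n word over {0,1} whose j-th letter is inc i j, and let R_i be the regular expression (r_i · 1) ∪ 0^*. Then there exists an m×(n+1) matrix over Bool whose i-th row matches R_i for every i, whose j-th column matches 0^* 1 (0 ∪ 1)^* for every j ≤ n, and whose (n+1)-st column matches (0^* (1 ∪ ε))^k 0^*, if and only if there exists a set S ⊆ Fin m with |S| ≤ k such that for every j ∈ Fin n there is some i ∈ S with inc i j = true (i.e., S is a vertex cover of size at most k). -/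
/-!
Each row equation forces row `i` to be either `r_i 1` or all zeros; call `S` the set of rows of the
first kind. A column `j ≤ n` then contains a `1` iff some `i ∈ S` has `inc i j = 1`, and the last
column is the indicator of `S`, which matches `(0^* (1 ∪ ε))^k 0^*` iff it has at most `k` ones.
-/

namespace RegexCrossword

/-- `k`-fold concatenation of a regular expression. -/
def rePow {σ : Type} (r : RegularExpression σ) : ℕ → RegularExpression σ
  | 0 => 1
  | k + 1 => r * rePow r k

/-- The regular expression matched exactly by the word `w`. -/
def wordRE {σ : Type} : List σ → RegularExpression σ
  | [] => 1
  | a :: w => RegularExpression.char a * wordRE w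


end RegexCrossword

open RegularExpression Finset Computability

section

variable {α : Type*}

theorem Language.mem_kstar_of_forall_singleton_mem {l : Language α} {w : List α}
    (h : ∀ a ∈ w, [a] ∈ l) : w ∈ l∗ :=
  Language.mem_kstar.2
    ⟨w.map fun a => [a], by rw [← List.flatMap_def, List.flatMap_singleton'], by simpa using h⟩

theorem RegularExpression.mem_matches'_star_char {a : α} {w : List α} :
    w ∈ (char a).star.matches' ↔ ∀ b ∈ w, b = a := by
  rw [matches'_star]
  refine ⟨fun h b hb => ?_, fun h => Language.mem_kstar_of_forall_singleton_mem ?_⟩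
  · obtain ⟨L, rfl, hL⟩ := Language.mem_kstar.1 h
    obtain ⟨l, hl, hbl⟩ := List.mem_flatten.1 hb
    have hl' : l = [a] := hL l hl
    simpa [hl'] using hbl
  · intro b hb
    rw [matches'_char, h b hb]
    rfl

end

theorem List.ofFn_snoc {α : Type*} {n : ℕ} (f : Fin n → α) (a : α) :
    List.ofFn (Fin.snoc f a) = List.ofFn f ++ [a] := by
  rw [List.ofFn_succ_last]
  simp

theorem List.count_true_ofFn {n : ℕ} (f : Fin n → Bool) :
    (List.ofFn f).count true = #{i | f i = true} := by
  rw [← Multiset.coe_count, ← Fin.univ_val_map, Multiset.count_map, card_def, filter_val]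
  simp only [eq_comm]

namespace RegexCrossword

variable {α : Type}

theorem matches'_wordRE (u : List α) : (wordRE u).matches' = {u} := by
  induction u with
  | nil => rfl
  | cons a u ih =>
    ext w
    rw [wordRE, matches'_mul, matches'_char, ih, Language.mem_mul]
    constructor
    · rintro ⟨_, rfl, _, rfl, rfl⟩
      rfl
    · rintro rfl
      exact ⟨[a], rfl, u, rfl, rfl⟩

theorem matches'_rePow (r : RegularExpression α) (k : ℕ) :
    (rePow r k).matches' = r.matches' ^ k := by
  induction k with
  | zero => rfl
  | succ k ih => rw [rePow, matches'_mul, ih, pow_succ']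

theorem mem_matches'_star_false {w : List Bool} :
    w ∈ (char false).star.matches' ↔ true ∉ w := by
  rw [mem_matches'_star_char]
  simp

theorem eq_star_false_append_true_cons_of_mem {w : List Bool} (h : true ∈ w) :
    ∃ s t, w = s ++ true :: t ∧ s ∈ (char false).star.matches' := by
  obtain ⟨s, t, rfl, hs⟩ := List.eq_append_cons_of_mem h
  exact ⟨s, t, rfl, mem_matches'_star_false.2 hs⟩

theorem ofFn_mem_matches'_row_iff {n : ℕ} (r : Fin n → Bool) (y : Fin (n + 1) → Bool) :
    List.ofFn y ∈ (wordRE (List.ofFn r) * char true + (char false).star).matches' ↔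
      y = Fin.snoc r true ∨ y = fun _ => false := by
  rw [matches'_add, matches'_mul, matches'_wordRE, matches'_char, Language.mem_add,
    Language.mem_mul, mem_matches'_star_false]
  refine or_congr ⟨?_, ?_⟩ ?_
  · rintro ⟨_, rfl, _, rfl, h⟩
    rw [← List.ofFn_snoc] at h
    exact List.ofFn_injective h.symm
  · rintro rfl
    exact ⟨_, rfl, _, rfl, (List.ofFn_snoc r true).symm⟩
  · simp only [List.mem_ofFn, funext_iff, not_exists, Bool.not_eq_true]

theorem mem_matches'_column_iff {w : List Bool} :
    w ∈ ((char false).star * char true * (char false + char true).star).matches' ↔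
      true ∈ w := by
  rw [matches'_mul, matches'_mul, matches'_char, Language.mem_mul]
  constructor
  · rintro ⟨_, ⟨s, -, _, rfl, rfl⟩, t, -, rfl⟩
    simp
  · intro h
    obtain ⟨s, t, rfl, hs⟩ := eq_star_false_append_true_cons_of_mem h
    have ht : t ∈ (char false + char true).star.matches' := by
      rw [matches'_star]
      refine Language.mem_kstar_of_forall_singleton_mem fun b _ => ?_
      rw [matches'_add, matches'_char, matches'_char]
      cases b
      exacts [Or.inl rfl, Or.inr rfl]
    exact ⟨s ++ [true], ⟨s, hs, [true], rfl, rfl⟩, t, ht, by simp⟩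

theorem count_true_le_one_of_mem_matches' {w : List Bool}
    (h : w ∈ ((char false).star * (char true + 1)).matches') : w.count true ≤ 1 := by
  rw [matches'_mul, Language.mem_mul] at h
  obtain ⟨s, hs, t, ht, rfl⟩ := h
  rw [mem_matches'_star_false] at hs
  rw [matches'_add, matches'_char, matches'_epsilon, Language.mem_add] at ht
  rcases ht with rfl | rfl <;> simp [List.count_eq_zero.2 hs]

theorem mem_matches'_lastColumn_iff (k : ℕ) {w : List Bool} :
    w ∈ (rePow ((char false).star * (char true + 1)) k * (char false).star).matches' ↔
      w.count true ≤ k := by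
  rw [matches'_mul, matches'_rePow]
  induction k generalizing w with
  | zero =>
    rw [pow_zero, one_mul, mem_matches'_star_false, Nat.le_zero, List.count_eq_zero]
  | succ k ih =>
    rw [pow_succ', mul_assoc, Language.mem_mul]
    constructor
    · rintro ⟨s, hs, t, ht, rfl⟩
      have hs1 := count_true_le_one_of_mem_matches' hs
      have htk := ih.1 ht
      rw [List.count_append]
      omega
    · intro h
      by_cases hw : true ∈ w
      · obtain ⟨s, t, rfl, hs⟩ := eq_star_false_append_true_cons_of_mem hw
        refine ⟨s ++ [true], ?_, t, ih.2 ?_, by simp⟩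
        · rw [matches'_mul]
          exact ⟨s, hs, [true], Or.inl rfl, rfl⟩
        · rw [mem_matches'_star_false, ← List.count_eq_zero] at hs
          simpa [hs] using h
      · have hnil : [] ∈ ((char false).star * (char true + 1)).matches' := by
          rw [matches'_mul]
          exact ⟨[], mem_matches'_star_false.2 List.not_mem_nil, [], Or.inr rfl, rfl⟩
        exact ⟨[], hnil, w, ih.2 (by simp [List.count_eq_zero.2 hw]), rfl⟩

open RegularExpression in
theorem vertex_cover_reduction_general (m n k : ℕ)
    (inc : Fin m → Fin n → Bool) :
    (∃ Y : Matrix (Fin m) (Fin (n + 1)) Bool,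
      (∀ i : Fin m,
        (List.ofFn fun j => Y i j) ∈
          (wordRE (List.ofFn fun j => inc i j) * char true +
            (char false).star).matches') ∧
      (∀ j : Fin (n + 1), (j : ℕ) < n →
        (List.ofFn fun i => Y i j) ∈
          ((char false).star * char true *
            (char false + char true).star).matches') ∧
      ((List.ofFn fun i => Y i (Fin.last n)) ∈
        (rePow ((char false).star * (char true + 1)) k *
          (char false).star).matches')) ↔
    (∃ S : Finset (Fin m), S.card ≤ k ∧ ∀ j : Fin n, ∃ i ∈ S, inc i j = true) := by
  eta_reduce
  simp only [ofFn_mem_matches'_row_iff, mem_matches'_column_iff, mem_matches'_lastColumn_iff,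
    List.count_true_ofFn, List.mem_ofFn]
  constructor
  · rintro ⟨Y, hrow, hcol, hlast⟩
    refine ⟨({i | Y i (Fin.last n) = true} : Finset (Fin m)), hlast, fun j => ?_⟩
    obtain ⟨i, hi⟩ := hcol j.castSucc j.is_lt
    rcases hrow i with hYi | hYi
    · exact ⟨i, by simp [hYi], by simpa [hYi] using hi⟩
    · simp [hYi] at hi
  · rintro ⟨S, hcard, hcover⟩
    refine ⟨fun i => if i ∈ S then Fin.snoc (inc i) true else fun _ => false,
      fun i => ?_, fun j hj => ?_, ?_⟩
    · by_cases hi : i ∈ S <;> simp [hi]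
    · obtain ⟨i, hiS, hinc⟩ := hcover (j.castLT hj)
      rw [← Fin.castSucc_castLT j hj]
      exact ⟨i, by simp only [hiS, if_true, Fin.snoc_castSucc, hinc]⟩
    · convert hcard using 2
      ext i
      by_cases hi : i ∈ S <;> simp [hi]

open RegularExpression in
/-- **Statement 14 (vertex cover reduction).**  Given `inc : Fin m → Fin n → Bool`
(the incidence matrix of a graph with `m` vertices and `n` edges) and `k ≥ 1`,
there is an `m × (n+1)` Boolean matrix whose `i`-th row matches
`R_i := r_i·1 ∪ 0^*` (where `r_i` is the `i`-th row of `inc`), whose first `n`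
columns match `0^* 1 (0 ∪ 1)^*`, and whose last column matches
`(0^* (1 ∪ ε))^k 0^*`, if and only if the graph has a vertex cover of size at
most `k`. -/
theorem vertex_cover_reduction (m n k : ℕ) (hm : 1 ≤ m) (hn : 1 ≤ n) (hk : 1 ≤ k)
    (inc : Fin m → Fin n → Bool) :
    (∃ Y : Matrix (Fin m) (Fin (n + 1)) Bool,
      (∀ i : Fin m,
        (List.ofFn fun j => Y i j) ∈
          (wordRE (List.ofFn fun j => inc i j) * char true +
            (char false).star).matches') ∧
      (∀ j : Fin (n + 1), (j : ℕ) < n →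
        (List.ofFn fun i => Y i j) ∈
          ((char false).star * char true *
            (char false + char true).star).matches') ∧
      ((List.ofFn fun i => Y i (Fin.last n)) ∈
        (rePow ((char false).star * (char true + 1)) k *
          (char false).star).matches')) ↔
    (∃ S : Finset (Fin m), S.card ≤ k ∧ ∀ j : Fin n, ∃ i ∈ S, inc i j = true) :=
  vertex_cover_reduction_general m n k inc

end RegexCrossword
end

section
/- Let n ≥ 1 and let c_1, …, c_m be clauses, where each clause is a nonempty finite list of literals and a literal is a pair (j, b) with j ∈ Fin n and b ∈ Bool. For each i define the regular expression R_i over Bool as the union, over literals (j, b) occurring in c_i, of (0 ∪ 1)^j · b · (0 ∪ 1)^{n−1−j}. Then there exists an m×n matrix over Bool each of whose columns matches 0^* ∪ 1^* and whose i-th row matches R_i for every i, if and only if there exists an assignment a : Fin n → Bool such that every clause c_i contains a literal (j, b) with a(j) = b (i.e., the CNF formula with clauses c_1, …, c_m is satisfiable). -/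
/-!
A column matches `0^* ∪ 1^*` exactly when it is constant, so a matrix with such columns is
an assignment `a` repeated in every row. The word `w` of length `n` matches the expression of
the literal `(j, b)` exactly when `w[j] = b`, so row `i` matches `R_i` exactly when `a`
satisfies clause `c_i`.
-/

namespace RegexCrossword

open RegularExpression in
/-- The regular expression `(0 ∪ 1)^j · b · (0 ∪ 1)^{n−1−j}` of a literal `(j, b)`. -/
def litRE (n : ℕ) (l : Fin n × Bool) : RegularExpression Bool :=
  rePow (char false + char true) (l.1 : ℕ) * char l.2 *
    rePow (char false + char true) (n - 1 - (l.1 : ℕ))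

/-- The regular expression of a clause: the union of the expressions of its
literals. -/
def clauseRE (n : ℕ) (c : List (Fin n × Bool)) : RegularExpression Bool :=
  (c.map (litRE n)).foldr (· + ·) 0

open RegularExpression

theorem mem_matches'_char {α : Type} (a : α) (w : List α) :
    w ∈ (char a).matches' ↔ w = [a] :=
  Iff.rfl

theorem mem_matches'_char_star {α : Type} (a : α) (w : List α) :
    w ∈ (char a).star.matches' ↔ ∀ x ∈ w, x = a := by
  rw [matches'_star, Language.mem_kstar]
  constructor
  · rintro ⟨L, rfl, hL⟩ x hx
    obtain ⟨y, hy, hxy⟩ := List.mem_flatten.mp hx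
    rw [hL y hy] at hxy
    exact List.mem_singleton.mp hxy
  · intro h
    refine ⟨w.map ([·]), by simp [← List.flatMap_def], ?_⟩
    simp only [List.mem_map, forall_exists_index, and_imp]
    rintro _ x hx rfl
    rw [mem_matches'_char, h x hx]

theorem ofFn_mem_matches'_star_false_add_star_true {m : ℕ} (v : Fin m → Bool) :
    List.ofFn v ∈ ((char false).star + (char true).star).matches' ↔ ∃ b, ∀ i, v i = b := by
  simp only [matches'_add, Language.mem_add, mem_matches'_char_star, List.forall_mem_ofFn_iff,
    Bool.exists_bool]

theorem mem_matches'_char_false_add_char_true (w : List Bool) :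
    w ∈ (char false + char true).matches' ↔ w.length = 1 := by
  rw [List.length_eq_one_iff]
  simp only [matches'_add, Language.mem_add, mem_matches'_char]
  constructor
  · rintro (rfl | rfl) <;> exact ⟨_, rfl⟩
  · rintro ⟨(_ | _), rfl⟩ <;> simp

theorem mem_rePow_char_false_add_char_true (k : ℕ) (w : List Bool) :
    w ∈ (rePow (char false + char true) k).matches' ↔ w.length = k := by
  induction k generalizing w with
  | zero => simp [rePow, List.length_eq_zero_iff]
  | succ k ih =>
    simp only [rePow, matches'_mul, Language.mem_mul, ih, mem_matches'_char_false_add_char_true]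
    constructor
    · rintro ⟨u, hu, v, rfl, rfl⟩
      simp [hu, add_comm]
    · intro h
      obtain ⟨x, t, rfl⟩ := List.exists_cons_of_length_eq_add_one h
      exact ⟨[x], rfl, t, by simpa using h, rfl⟩

theorem mem_rePow_mul_char_mul_rePow (j k : ℕ) (b : Bool) (w : List Bool) :
    w ∈ (rePow (char false + char true) j * char b * rePow (char false + char true) k).matches' ↔
      w.length = j + 1 + k ∧ w[j]? = some b := by
  simp only [matches'_mul, Language.mem_mul, mem_matches'_char, mem_rePow_char_false_add_char_true]
  constructor
  · rintro ⟨_, ⟨u, rfl, _, rfl, rfl⟩, v, rfl, rfl⟩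
    exact ⟨by simp; omega, by simp⟩
  · rintro ⟨hlen, hb⟩
    obtain ⟨hj, rfl⟩ := List.getElem?_eq_some_iff.mp hb
    refine ⟨w.take j ++ [w[j]], ⟨w.take j, by simp; omega, _, rfl, rfl⟩, w.drop (j + 1),
      by simp; omega, ?_⟩
    rw [List.append_assoc, List.singleton_append, List.getElem_cons_drop, List.take_append_drop]

theorem ofFn_mem_litRE {n : ℕ} (l : Fin n × Bool) (f : Fin n → Bool) :
    List.ofFn f ∈ (litRE n l).matches' ↔ f l.1 = l.2 := by
  have := l.1.isLt
  rw [litRE, mem_rePow_mul_char_mul_rePow]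
  exact ⟨fun h => by simpa using h.2, fun h => ⟨by simp; omega, by simp [h]⟩⟩

theorem mem_clauseRE {n : ℕ} (c : List (Fin n × Bool)) (w : List Bool) :
    w ∈ (clauseRE n c).matches' ↔ ∃ l ∈ c, w ∈ (litRE n l).matches' := by
  induction c with
  | nil => simp [clauseRE]
  | cons l c ih =>
    simp only [clauseRE, List.map_cons, List.foldr_cons, matches'_add, Language.mem_add] at ih ⊢
    rw [ih, List.exists_mem_cons_iff]

theorem ofFn_mem_clauseRE {n : ℕ} (c : List (Fin n × Bool)) (f : Fin n → Bool) :
    List.ofFn f ∈ (clauseRE n c).matches' ↔ ∃ l ∈ c, f l.1 = l.2 := by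
  simp only [mem_clauseRE, ofFn_mem_litRE]

open RegularExpression in
theorem sat_reduction_general (m n : ℕ)
    (cls : Fin m → List (Fin n × Bool)) :
    (∃ X : Matrix (Fin m) (Fin n) Bool,
      (∀ j : Fin n,
        (List.ofFn fun i => X i j) ∈
          ((char false).star + (char true).star).matches') ∧
      (∀ i : Fin m,
        (List.ofFn fun j => X i j) ∈ (clauseRE n (cls i)).matches')) ↔
    (∃ a : Fin n → Bool, ∀ i : Fin m, ∃ l ∈ cls i, a l.1 = l.2) := by
  simp only [ofFn_mem_matches'_star_false_add_star_true, ofFn_mem_clauseRE]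
  constructor
  · rintro ⟨X, hcol, hrow⟩
    choose a ha using hcol
    refine ⟨a, fun i => ?_⟩
    obtain ⟨l, hl, hX⟩ := hrow i
    exact ⟨l, hl, ha l.1 i ▸ hX⟩
  · rintro ⟨a, ha⟩
    exact ⟨fun _ j => a j, fun j => ⟨a j, fun _ => rfl⟩, ha⟩

open RegularExpression in
/-- **Statement 15 (SAT reduction).**  Let `n ≥ 1` and let `c_1, …, c_m` be
nonempty clauses of literals over variables `Fin n`.  There is an `m × n`
Boolean matrix each of whose columns matches `0^* ∪ 1^*` and whose `i`-th row
matches the clause expression `R_i`, if and only if the CNF formula with these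
clauses is satisfiable. -/
theorem sat_reduction (m n : ℕ) (hn : 1 ≤ n)
    (cls : Fin m → List (Fin n × Bool)) (hcls : ∀ i, cls i ≠ []) :
    (∃ X : Matrix (Fin m) (Fin n) Bool,
      (∀ j : Fin n,
        (List.ofFn fun i => X i j) ∈
          ((char false).star + (char true).star).matches') ∧
      (∀ i : Fin m,
        (List.ofFn fun j => X i j) ∈ (clauseRE n (cls i)).matches')) ↔
    (∃ a : Fin n → Bool, ∀ i : Fin m, ∃ l ∈ cls i, a l.1 = l.2) :=
  sat_reduction_general m n cls

end RegexCrossword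
end
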